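/- Let γ > 0 and 1 ≤ p ≤ ∞. For every g ∈ ℓ^p(ℤ≥0, B^γ), the function h = Hg belongs to ℓ^p(ℤ≥0, B^γ) and satisfies ‖h‖_{ℓ^p} ≤ (1 − e^{−γ})^{−1} ‖g‖_{ℓ^p}. -/

import Mathlib

open scoped ENNReal
open MeasureTheory

namespace BP

variable {X : Type*} [NormedAddCommGroup X] [NormedSpace ℝ X] [CompleteSpace X]

/-- Weighted coordinate size: index `k : ℕ` represents the coordinate `−k ≤ 0`,
so the weight `e^{γ m}` becomes `e^{−γ k}`. -/
noncomputable def wnorm (γ : ℝ) (φ : ℕ → X) (k : ℕ) : ℝ := ‖φ k‖ * Real.exp (-(γ * k))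

/-- Membership in the phase space `B^γ`. -/
def MemB (γ : ℝ) (φ : ℕ → X) : Prop := BddAbove (Set.range (wnorm γ φ))

/-- The `B^γ` norm `|φ|_{B^γ} = sup_{m ≤ 0} ‖φ(m)‖ e^{γ m}`. -/
noncomputable def Bnorm (γ : ℝ) (φ : ℕ → X) : ℝ := ⨆ k, wnorm γ φ k

/-- The history `x_n` of `x : ℤ → X` at time `n` : coordinate `−k` is `x (n − k)`. -/
def hist (x : ℤ → X) (n : ℤ) : ℕ → X := fun k => x (n - k)

/-- `x = x(·, τ, φ; f)` is the solution of `x(n+1) = L(n) x_n + f(n)` (`n ≥ τ`), `x_τ = φ`. -/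
def IsSolution (L : ℕ → ((ℕ → X) →ₗ[ℝ] X)) (f : ℕ → X) (τ : ℕ) (φ : ℕ → X)
    (x : ℤ → X) : Prop :=
  (∀ k : ℕ, x ((τ : ℤ) - k) = φ k) ∧
  (∀ n : ℕ, τ ≤ n → x ((n : ℤ) + 1) = L n (hist x (n : ℤ)) + f n)

/-- Restriction of `x : ℤ → X` to `ℤ≥0`. -/
def restrict (x : ℤ → X) : ℕ → X := fun n => x (n : ℤ)

/-- The `ℓ^p(ℤ≥0, X)` norm (valued in `ℝ≥0∞`). -/
noncomputable def lpNorm (p : ℝ≥0∞) {E : Type*} [NormedAddCommGroup E] (f : ℕ → E) : ℝ≥0∞ :=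
  eLpNorm f p Measure.count

/-- `L(n)` is a bounded operator from `B^γ` to `X`. -/
def OpBounded (γ : ℝ) (T : (ℕ → X) →ₗ[ℝ] X) : Prop :=
  ∃ C : ℝ, ∀ φ : ℕ → X, MemB γ φ → ‖T φ‖ ≤ C * Bnorm γ φ

/-- The projection `P_{[−∞,−j]}` : keeps coordinates `−k` with `k ≥ j`. -/
def Ptail (j : ℕ) : (ℕ → X) →ₗ[ℝ] (ℕ → X) where
  toFun φ := fun k => if j ≤ k then φ k else 0
  map_add' φ ψ := by funext k; by_cases h : j ≤ k <;> simp [h]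
  map_smul' c φ := by funext k; by_cases h : j ≤ k <;> simp [h]

/-- The projection `P_{[−j,0]}` : keeps coordinates `−k` with `k ≤ j`. -/
def Phead (j : ℕ) : (ℕ → X) →ₗ[ℝ] (ℕ → X) where
  toFun φ := fun k => if k ≤ j then φ k else 0
  map_add' φ ψ := by funext k; by_cases h : k ≤ j <;> simp [h]
  map_smul' c φ := by funext k; by_cases h : k ≤ j <;> simp [h]

/-- `E_{−j} : X → B^γ`, placing `ψ` at coordinate `−j`. -/
def Ecoord (j : ℕ) : X →ₗ[ℝ] (ℕ → X) where
  toFun ψ := fun k => if k = j then ψ else 0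
  map_add' ψ χ := by funext k; by_cases h : k = j <;> simp [h]
  map_smul' c ψ := by funext k; by_cases h : k = j <;> simp [h]

/-- The backward shift `S`. -/
def shiftS : (ℕ → X) →ₗ[ℝ] (ℕ → X) where
  toFun φ := fun k => if k = 0 then 0 else φ (k - 1)
  map_add' φ ψ := by funext k; by_cases h : k = 0 <;> simp [h]
  map_smul' c φ := by funext k; by_cases h : k = 0 <;> simp [h]

/-- `D(n) = E₀ ∘ L(n) + S`. -/
def Dop (L : ℕ → ((ℕ → X) →ₗ[ℝ] X)) (n : ℕ) : (ℕ → X) →ₗ[ℝ] (ℕ → X) :=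
  (Ecoord 0).comp (L n) + shiftS

/-- `h = H g`, `h(n) = Σ_{k=0}^{n−1} S^{n−k−1} (I − P₀) g(k)`. -/
noncomputable def Hop (g : ℕ → (ℕ → X)) : ℕ → (ℕ → X) :=
  fun n => ∑ k ∈ Finset.range n,
    ((shiftS ^ (n - k - 1) : (ℕ → X) →ₗ[ℝ] (ℕ → X))
      ((LinearMap.id - Phead 0 : (ℕ → X) →ₗ[ℝ] (ℕ → X)) (g k)))

/-- `(ℓ^p, ℓ^q)`-stability of the nonhomogeneous system. -/
def lplqStable (L : ℕ → ((ℕ → X) →ₗ[ℝ] X)) (p q : ℝ≥0∞) : Prop :=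
  ∀ f : ℕ → X, lpNorm p f < ∞ → ∀ x : ℤ → X, IsSolution L f 0 0 x →
    lpNorm q (restrict x) < ∞

/-- Uniform exponential stability in `X` w.r.t. `B^γ`. -/
def UESinX (γ : ℝ) (L : ℕ → ((ℕ → X) →ₗ[ℝ] X)) : Prop :=
  ∃ K : ℝ, 1 ≤ K ∧ ∃ ν : ℝ, 0 < ν ∧
    ∀ (τ : ℕ) (φ : ℕ → X), MemB γ φ → ∀ x : ℤ → X, IsSolution L 0 τ φ x →
      ∀ n : ℕ, τ ≤ n → ‖x (n : ℤ)‖ ≤ K * Real.exp (-(ν * ((n : ℝ) - (τ : ℝ)))) * Bnorm γ φ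

/-- Uniform exponential stability in `B^γ`. -/
def UESinB (γ : ℝ) (L : ℕ → ((ℕ → X) →ₗ[ℝ] X)) : Prop :=
  ∃ K : ℝ, 1 ≤ K ∧ ∃ ν : ℝ, 0 < ν ∧
    ∀ (τ : ℕ) (φ : ℕ → X), MemB γ φ → ∀ x : ℤ → X, IsSolution L 0 τ φ x →
      ∀ n : ℕ, τ ≤ n →
        Bnorm γ (hist x (n : ℤ)) ≤ K * Real.exp (-(ν * ((n : ℝ) - (τ : ℝ)))) * Bnorm γ φ

/-- Uniform stability in `X` w.r.t. `B^γ`. -/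
def USinX (γ : ℝ) (L : ℕ → ((ℕ → X) →ₗ[ℝ] X)) : Prop :=
  ∃ K : ℝ, 1 ≤ K ∧
    ∀ (τ : ℕ) (φ : ℕ → X), MemB γ φ → ∀ x : ℤ → X, IsSolution L 0 τ φ x →
      ∀ n : ℕ, τ ≤ n → ‖x (n : ℤ)‖ ≤ K * Bnorm γ φ

/-- Uniform stability in `B^γ`. -/
def USinB (γ : ℝ) (L : ℕ → ((ℕ → X) →ₗ[ℝ] X)) : Prop :=
  ∃ K : ℝ, 1 ≤ K ∧
    ∀ (τ : ℕ) (φ : ℕ → X), MemB γ φ → ∀ x : ℤ → X, IsSolution L 0 τ φ x →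
      ∀ n : ℕ, τ ≤ n → Bnorm γ (hist x (n : ℤ)) ≤ K * Bnorm γ φ

/-- Condition (★): there exists `m ≤ 0` (here `m = −j`, `j : ℕ`) such that
`sup_{n ≥ 0} ‖L(n) P_{[−∞,m]}‖_{B^γ→X} < ∞`. -/
def StarCond (γ : ℝ) (L : ℕ → ((ℕ → X) →ₗ[ℝ] X)) : Prop :=
  ∃ (j : ℕ) (C : ℝ), ∀ (n : ℕ) (φ : ℕ → X), MemB γ φ → ‖L n (Ptail j φ)‖ ≤ C * Bnorm γ φ

/-- `z` solves the first order system `z(n+1) = A(n) z(n)` (`n ≥ τ`), `z(τ) = ψ`. -/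
def IsFOSol (A : ℕ → ((ℕ → X) →ₗ[ℝ] (ℕ → X))) (τ : ℕ) (ψ : ℕ → X)
    (z : ℕ → (ℕ → X)) : Prop :=
  z τ = ψ ∧ ∀ n : ℕ, τ ≤ n → z (n + 1) = A n (z n)

/-- Uniform exponential stability of the first order system in `B^γ`. -/
def FOUES (γ : ℝ) (A : ℕ → ((ℕ → X) →ₗ[ℝ] (ℕ → X))) : Prop :=
  ∃ K : ℝ, 1 ≤ K ∧ ∃ ν : ℝ, 0 < ν ∧
    ∀ (τ : ℕ) (ψ : ℕ → X), MemB γ ψ → ∀ z : ℕ → (ℕ → X), IsFOSol A τ ψ z →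
      ∀ n : ℕ, τ ≤ n →
        Bnorm γ (z n) ≤ K * Real.exp (-(ν * ((n : ℝ) - (τ : ℝ)))) * Bnorm γ ψ

/-- Uniform stability of the first order system in `B^γ`. -/
def FOUS (γ : ℝ) (A : ℕ → ((ℕ → X) →ₗ[ℝ] (ℕ → X))) : Prop :=
  ∃ K : ℝ, 1 ≤ K ∧
    ∀ (τ : ℕ) (ψ : ℕ → X), MemB γ ψ → ∀ z : ℕ → (ℕ → X), IsFOSol A τ ψ z →
      ∀ n : ℕ, τ ≤ n → Bnorm γ (z n) ≤ K * Bnorm γ ψ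

/-- The associated subdiagonal system: `L_sub(0) = 0`, `L_sub(n) = L(n) P_{[−n+1,0]}`. -/
def Lsub (L : ℕ → ((ℕ → X) →ₗ[ℝ] X)) : ℕ → ((ℕ → X) →ₗ[ℝ] X) :=
  fun n => if n = 0 then 0 else (L n).comp (Phead (n - 1))

/-- The system has bounded delay of order `d`. -/
def BoundedDelay (L : ℕ → ((ℕ → X) →ₗ[ℝ] X)) (d : ℕ) : Prop :=
  ∀ n : ℕ, ∃ A : Fin d → (X →L[ℝ] X), ∀ φ : ℕ → X, L n φ = ∑ k : Fin d, A k (φ k)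

/-! ### Auxiliary lemmas -/

lemma wnorm_nonneg (γ : ℝ) (φ : ℕ → X) (k : ℕ) : 0 ≤ wnorm γ φ k :=
  mul_nonneg (norm_nonneg _) (Real.exp_pos _).le

lemma Bnorm_nonneg (γ : ℝ) (φ : ℕ → X) : 0 ≤ Bnorm γ φ :=
  Real.iSup_nonneg (wnorm_nonneg γ φ)

lemma wnorm_le_Bnorm {γ : ℝ} {φ : ℕ → X} (h : MemB γ φ) (k : ℕ) :
    wnorm γ φ k ≤ Bnorm γ φ := le_ciSup h k

lemma memB_mono {γ : ℝ} {φ ψ : ℕ → X} (hψ : MemB γ ψ)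
    (h : ∀ k, wnorm γ φ k ≤ wnorm γ ψ k) : MemB γ φ :=
  ⟨Bnorm γ ψ, by rintro x ⟨k, rfl⟩; exact (h k).trans (wnorm_le_Bnorm hψ k)⟩

lemma Bnorm_mono {γ : ℝ} {φ ψ : ℕ → X} (hψ : MemB γ ψ)
    (h : ∀ k, wnorm γ φ k ≤ wnorm γ ψ k) : Bnorm γ φ ≤ Bnorm γ ψ :=
  ciSup_le fun k => (h k).trans (wnorm_le_Bnorm hψ k)

lemma shiftS_pow_apply (j : ℕ) (φ : ℕ → X) (m : ℕ) :
    ((shiftS ^ j : (ℕ → X) →ₗ[ℝ] (ℕ → X)) φ) m = if m < j then 0 else φ (m - j) := by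
  induction j generalizing φ m with
  | zero => simp
  | succ j ih =>
    have hmul : ((shiftS ^ (j + 1) : (ℕ → X) →ₗ[ℝ] (ℕ → X)) φ) m
        = ((shiftS ^ j : (ℕ → X) →ₗ[ℝ] (ℕ → X)) (shiftS φ)) m := by
      rw [pow_succ]; rfl
    rw [hmul, ih]
    by_cases h : m < j
    · simp [h, Nat.lt_succ_of_lt h]
    · by_cases h2 : m = j
      · subst h2
        simp [shiftS, Nat.sub_self]
      · have h3 : ¬ m < j + 1 := by omega
        have h4 : m - j ≠ 0 := by omega
        have h5 : m - j - 1 = m - (j + 1) := by omega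
        simp [h, h2, h3, h4, h5, shiftS]

lemma wnorm_shiftS_pow_le {γ : ℝ} {ψ : ℕ → X} (hψ : MemB γ ψ) (j m : ℕ) :
    wnorm γ ((shiftS ^ j : (ℕ → X) →ₗ[ℝ] (ℕ → X)) ψ) m
      ≤ Real.exp (-(γ * j)) * Bnorm γ ψ := by
  unfold wnorm
  rw [shiftS_pow_apply]
  by_cases h : m < j
  · rw [if_pos h, norm_zero, zero_mul]
    exact mul_nonneg (Real.exp_pos _).le (Bnorm_nonneg _ _)
  · rw [if_neg h]
    have hm : (m : ℝ) = ((m - j : ℕ) : ℝ) + j := by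
      rw [Nat.cast_sub (le_of_not_gt h)]; ring
    have hexp : Real.exp (-(γ * m)) =
        Real.exp (-(γ * ((m - j : ℕ) : ℝ))) * Real.exp (-(γ * j)) := by
      rw [← Real.exp_add]; congr 1; rw [hm]; ring
    calc ‖ψ (m - j)‖ * Real.exp (-(γ * m))
        = wnorm γ ψ (m - j) * Real.exp (-(γ * j)) := by
          unfold wnorm; rw [hexp]; ring
      _ ≤ Bnorm γ ψ * Real.exp (-(γ * j)) :=
          mul_le_mul_of_nonneg_right (wnorm_le_Bnorm hψ _) (Real.exp_pos _).le
      _ = Real.exp (-(γ * j)) * Bnorm γ ψ := mul_comm _ _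

lemma sub_phead_apply (ψ : ℕ → X) (k : ℕ) :
    ((LinearMap.id - Phead 0 : (ℕ → X) →ₗ[ℝ] (ℕ → X)) ψ) k
      = if k = 0 then 0 else ψ k := by
  by_cases h : k = 0 <;> simp [Phead, h, Nat.le_zero]

lemma wnorm_sub_phead_le (γ : ℝ) (ψ : ℕ → X) (k : ℕ) :
    wnorm γ ((LinearMap.id - Phead 0 : (ℕ → X) →ₗ[ℝ] (ℕ → X)) ψ) k ≤ wnorm γ ψ k := by
  unfold wnorm
  rw [sub_phead_apply]
  by_cases h : k = 0
  · rw [if_pos h, norm_zero, zero_mul]; exact wnorm_nonneg γ ψ k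
  · rw [if_neg h]

/-- The pointwise dominating sequence for `Bnorm γ (Hop g n)`. -/
noncomputable def Creal (γ : ℝ) (g : ℕ → (ℕ → X)) (n : ℕ) : ℝ :=
  ∑ k ∈ Finset.range n, Real.exp (-(γ * ((n - k - 1 : ℕ) : ℝ))) * Bnorm γ (g k)

lemma Creal_nonneg (γ : ℝ) (g : ℕ → (ℕ → X)) (n : ℕ) : 0 ≤ Creal γ g n :=
  Finset.sum_nonneg fun k _ => mul_nonneg (Real.exp_pos _).le (Bnorm_nonneg _ _)

lemma wnorm_Hop_le {γ : ℝ} {g : ℕ → (ℕ → X)} (hg : ∀ n, MemB γ (g n)) (n m : ℕ) :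
    wnorm γ (Hop g n) m ≤ Creal γ g n := by
  have key : ∀ k, wnorm γ ((shiftS ^ (n - k - 1) : (ℕ → X) →ₗ[ℝ] (ℕ → X))
      ((LinearMap.id - Phead 0 : (ℕ → X) →ₗ[ℝ] (ℕ → X)) (g k))) m
      ≤ Real.exp (-(γ * ((n - k - 1 : ℕ) : ℝ))) * Bnorm γ (g k) := by
    intro k
    have h1 : MemB γ ((LinearMap.id - Phead 0 : (ℕ → X) →ₗ[ℝ] (ℕ → X)) (g k)) :=
      memB_mono (hg k) (wnorm_sub_phead_le γ (g k))
    refine (wnorm_shiftS_pow_le h1 _ m).trans ?_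
    exact mul_le_mul_of_nonneg_left (Bnorm_mono (hg k) (wnorm_sub_phead_le γ (g k)))
      (Real.exp_pos _).le
  calc wnorm γ (Hop g n) m
      ≤ ∑ k ∈ Finset.range n, wnorm γ ((shiftS ^ (n - k - 1) : (ℕ → X) →ₗ[ℝ] (ℕ → X))
          ((LinearMap.id - Phead 0 : (ℕ → X) →ₗ[ℝ] (ℕ → X)) (g k))) m := by
        unfold wnorm Hop
        rw [Finset.sum_apply]
        calc ‖∑ k ∈ Finset.range n, ((shiftS ^ (n - k - 1) : (ℕ → X) →ₗ[ℝ] (ℕ → X))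
              ((LinearMap.id - Phead 0 : (ℕ → X) →ₗ[ℝ] (ℕ → X)) (g k))) m‖
              * Real.exp (-(γ * m))
            ≤ (∑ k ∈ Finset.range n, ‖((shiftS ^ (n - k - 1) : (ℕ → X) →ₗ[ℝ] (ℕ → X))
              ((LinearMap.id - Phead 0 : (ℕ → X) →ₗ[ℝ] (ℕ → X)) (g k))) m‖)
              * Real.exp (-(γ * m)) :=
              mul_le_mul_of_nonneg_right (norm_sum_le _ _) (Real.exp_pos _).le
          _ = _ := Finset.sum_mul _ _ _
    _ ≤ Creal γ g n := Finset.sum_le_sum fun k _ => key k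

lemma sum_shift_le (a : ℕ → ℝ≥0∞) (n : ℕ) :
    ∑ k ∈ Finset.range n, a (n - k - 1) ≤ ∑' j, a j := by
  have h : ∑ k ∈ Finset.range n, a (n - k - 1) = ∑ k ∈ Finset.range n, a k := by
    have : ∀ k, n - k - 1 = n - 1 - k := fun k => by omega
    simp only [this]
    exact Finset.sum_range_reflect a n
  rw [h]
  exact ENNReal.sum_le_tsum _

set_option maxHeartbeats 1000000 in
/-- Discrete Young-type inequality in `ℝ≥0∞`. -/
lemma young_ennreal (a v : ℕ → ℝ≥0∞) {S : ℝ≥0∞} (hS : ∑' j, a j = S)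
    (hS0 : S ≠ 0) (hStop : S ≠ ∞) {pr : ℝ} (hpr : 1 ≤ pr) :
    ∑' n, (∑ k ∈ Finset.range n, a (n - k - 1) * v k) ^ pr
      ≤ S ^ pr * ∑' n, v n ^ pr := by
  have hpr0 : (0 : ℝ) < pr := lt_of_lt_of_le one_pos hpr
  have step1 : ∀ n, (∑ k ∈ Finset.range n, a (n - k - 1) * v k) ^ pr
      ≤ S ^ (pr - 1) * ∑ k ∈ Finset.range n, a (n - k - 1) * v k ^ pr := by
    intro n
    set T : ℝ≥0∞ := ∑ k ∈ Finset.range n, a (n - k - 1) with hT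
    have hTS : T ≤ S := hS ▸ sum_shift_le a n
    by_cases hT0 : T = 0
    · have hz : ∀ k ∈ Finset.range n, a (n - k - 1) * v k = 0 := by
        intro k hk
        rw [Finset.sum_eq_zero_iff] at hT0
        rw [hT0 k hk, zero_mul]
      rw [Finset.sum_eq_zero hz, ENNReal.zero_rpow_of_pos hpr0]
      exact zero_le
    · have hTtop : T ≠ ∞ := (lt_of_le_of_lt hTS hStop.lt_top).ne
      set w : ℕ → ℝ≥0∞ := fun k => T⁻¹ * a (n - k - 1) with hw
      have hw1 : ∑ k ∈ Finset.range n, w k = 1 := by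
        rw [hw]
        simp only
        rw [← Finset.mul_sum, ← hT, ENNReal.inv_mul_cancel hT0 hTtop]
      have H := ENNReal.rpow_arith_mean_le_arith_mean_rpow (Finset.range n) w v hw1 hpr
      have hc : ∑ k ∈ Finset.range n, w k * v k
          = T⁻¹ * ∑ k ∈ Finset.range n, a (n - k - 1) * v k := by
        rw [Finset.mul_sum]
        exact Finset.sum_congr rfl fun k _ => mul_assoc _ _ _
      have hd : ∑ k ∈ Finset.range n, w k * v k ^ pr
          = T⁻¹ * ∑ k ∈ Finset.range n, a (n - k - 1) * v k ^ pr := by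
        rw [Finset.mul_sum]
        exact Finset.sum_congr rfl fun k _ => mul_assoc _ _ _
      rw [hc, hd] at H
      set c : ℝ≥0∞ := ∑ k ∈ Finset.range n, a (n - k - 1) * v k with hcdef
      set D : ℝ≥0∞ := ∑ k ∈ Finset.range n, a (n - k - 1) * v k ^ pr with hD
      have hcT : c = T * (T⁻¹ * c) := by
        rw [← mul_assoc, ENNReal.mul_inv_cancel hT0 hTtop, one_mul]
      calc c ^ pr = (T * (T⁻¹ * c)) ^ pr := by rw [← hcT]
        _ = T ^ pr * (T⁻¹ * c) ^ pr := ENNReal.mul_rpow_of_nonneg _ _ hpr0.le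
        _ ≤ T ^ pr * (T⁻¹ * D) := mul_le_mul_right H _
        _ = (T ^ pr * T ^ (-1 : ℝ)) * D := by rw [← ENNReal.rpow_neg_one T, mul_assoc]
        _ = T ^ (pr - 1) * D := by
            rw [← ENNReal.rpow_add pr (-1) hT0 hTtop, show pr + -1 = pr - 1 from by ring]
        _ ≤ S ^ (pr - 1) * D :=
            mul_le_mul_left (ENNReal.rpow_le_rpow hTS (by linarith)) _
  have key2 : ∀ u : ℕ → ℝ≥0∞,
      ∑' n, ∑ k ∈ Finset.range n, a (n - k - 1) * u k = S * ∑' k, u k := by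
    intro u
    have h1 : ∀ n, ∑ k ∈ Finset.range n, a (n - k - 1) * u k
        = ∑' k, (if k < n then a (n - k - 1) * u k else 0) := by
      intro n
      rw [tsum_eq_sum (s := Finset.range n)
        (fun k hk => if_neg fun h => hk (Finset.mem_range.2 h))]
      exact (Finset.sum_congr rfl fun k hk => (if_pos (Finset.mem_range.1 hk))).symm
    calc ∑' n, ∑ k ∈ Finset.range n, a (n - k - 1) * u k
        = ∑' n, ∑' k, (if k < n then a (n - k - 1) * u k else 0) := tsum_congr h1
      _ = ∑' k, ∑' n, (if k < n then a (n - k - 1) * u k else 0) := ENNReal.tsum_comm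
      _ = ∑' k, u k * ∑' n, (if k < n then a (n - k - 1) else 0) := by
          refine tsum_congr fun k => ?_
          rw [← ENNReal.tsum_mul_left]
          refine tsum_congr fun n => ?_
          split
          · exact mul_comm _ _
          · simp
      _ = ∑' k, u k * S := by
          refine tsum_congr fun k => ?_
          congr 1
          have hginj : Function.Injective (fun i : ℕ => i + (k + 1)) := fun i j h => by simpa using h
          have hsupp : Function.support (fun n => if k < n then a (n - k - 1) else 0)
              ⊆ Set.range (fun i : ℕ => i + (k + 1)) := by
            intro n hn
            have hkn : k < n := by
              by_contra h
              exact hn (if_neg h)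
            exact ⟨n - (k + 1), by show n - (k + 1) + (k + 1) = n; omega⟩
          rw [← hginj.tsum_eq hsupp, ← hS]
          refine tsum_congr fun i => ?_
          show (if k < i + (k + 1) then a (i + (k + 1) - k - 1) else 0) = a i
          rw [if_pos (by omega)]
          congr 1
          omega
      _ = S * ∑' k, u k := by
          rw [← ENNReal.tsum_mul_left]
          exact tsum_congr fun k => mul_comm _ _
  calc ∑' n, (∑ k ∈ Finset.range n, a (n - k - 1) * v k) ^ pr
      ≤ ∑' n, S ^ (pr - 1) * ∑ k ∈ Finset.range n, a (n - k - 1) * v k ^ pr :=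
        ENNReal.tsum_le_tsum step1
    _ = S ^ (pr - 1) * ∑' n, ∑ k ∈ Finset.range n, a (n - k - 1) * v k ^ pr :=
        ENNReal.tsum_mul_left
    _ = S ^ (pr - 1) * (S * ∑' k, v k ^ pr) := by rw [key2]
    _ = S ^ pr * ∑' n, v n ^ pr := by
        rw [← mul_assoc]
        congr 1
        have h := (ENNReal.rpow_add (pr - 1) 1 hS0 hStop).symm
        rw [ENNReal.rpow_one] at h
        rw [h]
        norm_num

set_option maxHeartbeats 1000000 in
/-- Proposition 3.9: for `γ > 0` and `g ∈ ℓ^p(ℤ≥0, B^γ)`, the function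
`h = Hg` belongs to `ℓ^p(ℤ≥0, B^γ)` with `‖h‖_p ≤ (1 − e^{−γ})⁻¹ ‖g‖_p`. -/
theorem statement10 (γ : ℝ) (hγ : 0 < γ) (p : ℝ≥0∞) (hp : 1 ≤ p)
    (g : ℕ → (ℕ → X)) (hg : ∀ n, MemB γ (g n))
    (hgp : lpNorm p (fun n => Bnorm γ (g n)) < ∞) :
    (∀ n, MemB γ (Hop g n)) ∧
    lpNorm p (fun n => Bnorm γ (Hop g n)) < ∞ ∧
    lpNorm p (fun n => Bnorm γ (Hop g n)) ≤
      ENNReal.ofReal (1 - Real.exp (-γ))⁻¹ * lpNorm p (fun n => Bnorm γ (g n)) := by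
  have hmem : ∀ n, MemB γ (Hop g n) := fun n =>
    ⟨Creal γ g n, by rintro x ⟨m, rfl⟩; exact wnorm_Hop_le hg n m⟩
  have hBle : ∀ n, Bnorm γ (Hop g n) ≤ Creal γ g n := fun n => ciSup_le (wnorm_Hop_le hg n)
  set S : ℝ≥0∞ := ENNReal.ofReal (1 - Real.exp (-γ))⁻¹ with hSdef
  set a : ℕ → ℝ≥0∞ := fun j => ENNReal.ofReal (Real.exp (-(γ * j))) with ha
  have hexp1 : Real.exp (-γ) < 1 := Real.exp_lt_one_iff.2 (by linarith)
  have hpos : (0 : ℝ) < 1 - Real.exp (-γ) := by linarith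
  have hSa : ∑' j, a j = S := by
    have h1 : ∀ j : ℕ, a j = ENNReal.ofReal (Real.exp (-γ)) ^ j := by
      intro j
      rw [ha]
      simp only
      rw [← ENNReal.ofReal_pow (Real.exp_pos _).le, ← Real.exp_nat_mul]
      congr 1
      ring
    rw [tsum_congr h1, ENNReal.tsum_geometric, hSdef,
      ENNReal.ofReal_inv_of_pos hpos, ENNReal.ofReal_sub _ (Real.exp_pos _).le,
      ENNReal.ofReal_one]
  have hS0 : S ≠ 0 := (ENNReal.ofReal_pos.2 (inv_pos.2 hpos)).ne'
  have hStop : S ≠ ∞ := ENNReal.ofReal_ne_top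
  -- ennnorm of Creal
  have hCnn : ∀ n, (‖Creal γ g n‖₊ : ℝ≥0∞)
      = ∑ k ∈ Finset.range n, a (n - k - 1) * (‖Bnorm γ (g k)‖₊ : ℝ≥0∞) := by
    intro n
    rw [← enorm_eq_nnnorm, Real.enorm_eq_ofReal (Creal_nonneg γ g n)]
    unfold Creal
    rw [ENNReal.ofReal_sum_of_nonneg
      (fun k _ => mul_nonneg (Real.exp_pos _).le (Bnorm_nonneg _ _))]
    exact Finset.sum_congr rfl fun k _ => by
      rw [ENNReal.ofReal_mul (Real.exp_pos _).le,
        ← enorm_eq_nnnorm, Real.enorm_eq_ofReal (Bnorm_nonneg _ _), ha]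
  -- first reduction
  have hstepA : lpNorm p (fun n => Bnorm γ (Hop g n)) ≤ lpNorm p (Creal γ g) :=
    eLpNorm_mono_real fun n => by
      rw [Real.norm_of_nonneg (Bnorm_nonneg _ _)]; exact hBle n
  -- main estimate
  have hstepB : lpNorm p (Creal γ g) ≤ S * lpNorm p (fun n => Bnorm γ (g n)) := by
    by_cases hptop : p = ⊤
    · subst hptop
      unfold lpNorm
      rw [eLpNorm_exponent_top, eLpNorm_exponent_top, eLpNormEssSup_count, eLpNormEssSup_count]
      refine iSup_le fun n => ?_
      calc (‖Creal γ g n‖₊ : ℝ≥0∞)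
          = ∑ k ∈ Finset.range n, a (n - k - 1) * (‖Bnorm γ (g k)‖₊ : ℝ≥0∞) := hCnn n
        _ ≤ ∑ k ∈ Finset.range n, a (n - k - 1) * ⨆ m, (‖Bnorm γ (g m)‖₊ : ℝ≥0∞) :=
            Finset.sum_le_sum fun k _ => mul_le_mul_right (le_iSup (fun m => ((‖Bnorm γ (g m)‖₊ : ℝ≥0∞))) k) _
        _ = (∑ k ∈ Finset.range n, a (n - k - 1)) * ⨆ m, (‖Bnorm γ (g m)‖₊ : ℝ≥0∞) :=
            (Finset.sum_mul _ _ _).symm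
        _ ≤ S * ⨆ m, (‖Bnorm γ (g m)‖₊ : ℝ≥0∞) :=
            mul_le_mul_left (hSa ▸ sum_shift_le a n) _
    · have hp0 : p ≠ 0 := (zero_lt_one.trans_le hp).ne'
      have hpr : 1 ≤ p.toReal := by
        rw [← ENNReal.toReal_one]
        exact ENNReal.toReal_mono hptop hp
      have hpr0 : (0 : ℝ) < p.toReal := lt_of_lt_of_le one_pos hpr
      unfold lpNorm
      rw [eLpNorm_eq_lintegral_rpow_enorm_toReal hp0 hptop,
        eLpNorm_eq_lintegral_rpow_enorm_toReal hp0 hptop, lintegral_count, lintegral_count]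
      set v : ℕ → ℝ≥0∞ := fun k => (‖Bnorm γ (g k)‖₊ : ℝ≥0∞) with hv
      have hy := young_ennreal a v hSa hS0 hStop hpr
      calc (∑' n, (‖Creal γ g n‖₊ : ℝ≥0∞) ^ p.toReal) ^ (1 / p.toReal)
          = (∑' n, (∑ k ∈ Finset.range n, a (n - k - 1) * v k) ^ p.toReal)
              ^ (1 / p.toReal) := by
            congr 1
            exact tsum_congr fun n => by rw [hCnn n]
        _ ≤ (S ^ p.toReal * ∑' n, v n ^ p.toReal) ^ (1 / p.toReal) :=
            ENNReal.rpow_le_rpow hy (by positivity)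
        _ = S * (∑' n, v n ^ p.toReal) ^ (1 / p.toReal) := by
            rw [ENNReal.mul_rpow_of_nonneg _ _ (by positivity), ← ENNReal.rpow_mul,
              mul_one_div, div_self hpr0.ne', ENNReal.rpow_one]
  have hfinal : lpNorm p (fun n => Bnorm γ (Hop g n))
      ≤ S * lpNorm p (fun n => Bnorm γ (g n)) := hstepA.trans hstepB
  exact ⟨hmem, lt_of_le_of_lt hfinal (ENNReal.mul_lt_top hStop.lt_top hgp), hfinal⟩

end BP
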